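/- arXiv:2208.10866 — 2 statements merged into one kernel-verified Lean document; each statement's English description precedes it below -/
import Mathlib

section
/- Knowledge of enhanced message chains: Let f ≥ 0, let Q be a deterministic protocol, let r ∈ R(Q,γ^f), let m ∈ ℕ, and write θ_s = ⟨s,0⟩ and θ_d = ⟨d,m⟩. If K_d(v_s = 1) holds at (r,m), then K_d(θ_s ⇝ θ_d) holds at (r,m), where θ_s ⇝ θ_d denotes the fact that holds at (r',m) iff there is an enhanced message chain from ⟨s,0⟩ to ⟨d,m⟩ in r'. -/
namespace NullMessages

/-- Global parameters of the synchronous crash-failure model `γ^f`: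
`N > 2` processes (`Fin N`), a source `s`, a destination `d`, a directed
communication network `chan`, a bound `f` on the number of crashes per run,
and fixed initial values `vOther` for the processes other than `s`. -/
structure Params where
  N : ℕ
  N_gt : 2 < N
  s : Fin N
  d : Fin N
  sd_ne : s ≠ d
  chan : Fin N → Fin N → Bool
  f : ℕ
  vOther : Fin N → Bool

/-- A failure pattern: `fp q = some (t, Bl)` says that `q` crashes at time `t`,
and in its crash round its message to `p` is sent iff `p ∉ Bl`.
At most `f` processes fail. -/
structure FPat (P : Params) where
  fp : Fin P.N → Option (ℕ × Finset (Fin P.N))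
  card_le : (Finset.univ.filter fun q => (fp q).isSome).card ≤ P.f

/-- The set of processes that fail in a failure pattern. -/
def FPat.F {P : Params} (FP : FPat P) : Finset (Fin P.N) :=
  Finset.univ.filter fun q => (FP.fp q).isSome

/-- A run of a (deterministic) protocol is uniquely determined by the
initial value `v_s` of the source and a failure pattern. -/
abbrev Run (P : Params) := Bool × FPat P

/-- Process-time nodes `⟨p,t⟩`. -/
abbrev Node (P : Params) := Fin P.N × ℕ

/-- An event observed by a process in one round: the messages it sent and
the messages it received (indexed by the other endpoint of the channel). -/
structure Event (P : Params) (Msg : Type) where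
  sent : Fin P.N → Option Msg
  rcvd : Fin P.N → Option Msg

/-- A local state: the process's initial value together with the sequence of
events it has observed so far (the current time is the length of that list). -/
abbrev LState (P : Params) (Msg : Type) := Bool × List (Event P Msg)

/-- A deterministic protocol: as a function of the local state, which message
(if any) to send to each process, and which actions (named by `ℕ`) to perform. -/
structure Protocol (P : Params) (Msg : Type) where
  send : LState P Msg → Fin P.N → Option Msg
  act : LState P Msg → Set ℕ

/-- The initial value of process `p` when the source's value is `b`. -/
def initVal (P : Params) (b : Bool) (p : Fin P.N) : Bool :=
  if p = P.s then b else P.vOther p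

/-- The message actually sent from `i` to `j` at time `t` (i.e. in round `t+1`)
in run `r`, given the local states `σ` at time `t`: the prescribed message,
except that a process sends nothing after its crash time, and at its crash time
its message to `j` is suppressed iff `j` is in its blocked set. -/
def sendRound (P : Params) {Msg : Type} (Q : Protocol P Msg) (r : Run P)
    (σ : Fin P.N → LState P Msg) (t : ℕ) (i j : Fin P.N) : Option Msg :=
  if P.chan i j then
    match r.2.fp i with
    | none => Q.send (σ i) j
    | some x =>
        if t < x.1 then Q.send (σ i) j
        else if t = x.1 then (if j ∈ x.2 then none else Q.send (σ i) j)
        else none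
  else none

/-- One synchronous step of process `p`'s local state. -/
def stepState (P : Params) {Msg : Type} (Q : Protocol P Msg) (r : Run P)
    (σ : Fin P.N → LState P Msg) (t : ℕ) (p : Fin P.N) : LState P Msg :=
  ((σ p).1,
    (σ p).2 ++ [⟨fun j => sendRound P Q r σ t p j, fun j => sendRound P Q r σ t j p⟩])

/-- The local state `r_p(t)` of each process `p` at each time `t` in run `r`
of protocol `Q`.  A crashed process is inactive (its state is frozen) from the
round after its crash on. -/
def stateAt (P : Params) {Msg : Type} (Q : Protocol P Msg) (r : Run P) :
    ℕ → Fin P.N → LState P Msg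
  | 0 => fun p => (initVal P r.1 p, [])
  | t + 1 => fun p =>
      let σ := stateAt P Q r t
      match r.2.fp p with
      | some x => if x.1 ≤ t then σ p else stepState P Q r σ t p
      | none => stepState P Q r σ t p

/-- The message (if any) actually sent from `i` to `j` at time `t` in run `r`. -/
def msgSent (P : Params) {Msg : Type} (Q : Protocol P Msg) (r : Run P)
    (i j : Fin P.N) (t : ℕ) : Option Msg :=
  sendRound P Q r (stateAt P Q r t) t i j

/-- `i` sends an actual message to `j` at `(r,t)`. -/
def SendsActual (P : Params) {Msg : Type} (Q : Protocol P Msg) (r : Run P)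
    (i j : Fin P.N) (t : ℕ) : Prop :=
  (msgSent P Q r i j t).isSome

/-- The channel from `i` to `j` is blocked at `(r,t)`: `i` fails at some time
`t' < t`, or at time `t' = t` with `j` in its blocked set. -/
def BlockedAt (P : Params) (r : Run P) (i j : Fin P.N) (t : ℕ) : Prop :=
  ∃ x ∈ r.2.fp i, x.1 < t ∨ (x.1 = t ∧ j ∈ x.2)

/-- `i` sends `j` a *null message* at `(r,t)`: the channel is not blocked,
`i` sends no actual message to `j` at `(r,t)`, and in some run `r'` of the
same protocol `i` does send `j` an actual message at time `t`. -/
def SendsNull (P : Params) {Msg : Type} (Q : Protocol P Msg) (r : Run P)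
    (i j : Fin P.N) (t : ℕ) : Prop :=
  ¬ BlockedAt P r i j t ∧ ¬ SendsActual P Q r i j t ∧
    ∃ r' : Run P, SendsActual P Q r' i j t

/-- `i` sends `j` an actual message or a null message at `(r,t)`. -/
def SendsE (P : Params) {Msg : Type} (Q : Protocol P Msg) (r : Run P)
    (i j : Fin P.N) (t : ℕ) : Prop :=
  SendsActual P Q r i j t ∨ SendsNull P Q r i j t

/-- An *enhanced message chain* `θ ⇝ θ'` in run `r`: processes
`p = i₁, …, i_k = q` and times `t ≤ t₁ < ⋯ < t_k = t'` such that each `i_h`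
sends an actual or null message to `i_{h+1}` at `(r,t_h)`. -/
inductive Chain (P : Params) {Msg : Type} (Q : Protocol P Msg) (r : Run P) :
    Node P → Node P → Prop
  | wait {p : Fin P.N} {t t' : ℕ} (h : t ≤ t') : Chain P Q r (p, t) (p, t')
  | step {p j q : Fin P.N} {t u t' : ℕ} (h1 : t ≤ u) (h2 : SendsE P Q r p j u)
      (h3 : Chain P Q r (j, u + 1) (q, t')) : Chain P Q r (p, t) (q, t')

/-- Knowledge: `K_i φ` holds at `(r,m)` iff `φ` holds at `(r',m)` for every run
`r'` of the protocol that is indistinguishable from `r` to `i` at time `m`. -/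
def Kn (P : Params) {Msg : Type} (Q : Protocol P Msg) (i : Fin P.N)
    (φ : Run P → ℕ → Prop) (r : Run P) (m : ℕ) : Prop :=
  ∀ r' : Run P, stateAt P Q r' m i = stateAt P Q r m i → φ r' m

/-- Process `i` performs action `α` at time `m` in run `r`: the protocol
prescribes `α` in `i`'s current local state and `i` has not yet reached its
crash round (a crashing process performs no actions in its crash round). -/
def Performs (P : Params) {Msg : Type} (Q : Protocol P Msg) (r : Run P)
    (i : Fin P.N) (α : ℕ) (m : ℕ) : Prop :=
  (∀ x ∈ r.2.fp i, m < x.1) ∧ α ∈ Q.act (stateAt P Q r m i)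

/-- Local edges of the communication graph. -/
def El (P : Params) (u v : Node P) : Prop := v.1 = u.1 ∧ v.2 = u.2 + 1

/-- Actual-message edges of the communication graph `CG_Q(r)`. -/
def Ea (P : Params) {Msg : Type} (Q : Protocol P Msg) (r : Run P)
    (u v : Node P) : Prop :=
  SendsActual P Q r u.1 v.1 u.2 ∧ v.2 = u.2 + 1

/-- Null-message edges of the communication graph `CG_Q(r)`. -/
def En (P : Params) {Msg : Type} (Q : Protocol P Msg) (r : Run P)
    (u v : Node P) : Prop :=
  SendsNull P Q r u.1 v.1 u.2 ∧ v.2 = u.2 + 1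

/-- Edges of the communication graph `CG_Q(r)`. -/
def Edge (P : Params) {Msg : Type} (Q : Protocol P Msg) (r : Run P)
    (u v : Node P) : Prop :=
  El P u v ∨ Ea P Q r u v ∨ En P Q r u v

/-- `π` is a path from `θ` to `θ'` in the communication graph `CG_Q(r)`. -/
def IsPath (P : Params) {Msg : Type} (Q : Protocol P Msg) (r : Run P)
    (π : List (Node P)) (θ θ' : Node P) : Prop :=
  π.head? = some θ ∧ π.getLast? = some θ' ∧ π.Chain' (Edge P Q r)

/-- `π` is a *B null free* path: each of its edges is a local edge, an
actual-message edge, or a null-message edge whose sender is not in `B`. -/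
def BNullFree (P : Params) {Msg : Type} (Q : Protocol P Msg) (r : Run P)
    (B : Set (Fin P.N)) (π : List (Node P)) : Prop :=
  π.Chain' fun u v => El P u v ∨ Ea P Q r u v ∨ (En P Q r u v ∧ u.1 ∉ B)

/-- `π` is an actual message chain (a path using only local and
actual-message edges) from `θ` to `θ'` in `CG_Q(r)`. -/
def IsActualPath (P : Params) {Msg : Type} (Q : Protocol P Msg) (r : Run P)
    (π : List (Node P)) (θ θ' : Node P) : Prop :=
  π.head? = some θ ∧ π.getLast? = some θ' ∧
    π.Chain' fun u v => El P u v ∨ Ea P Q r u v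

/-- There is an actual message chain from `θ` to `θ'` in `r`. -/
def ActualChain (P : Params) {Msg : Type} (Q : Protocol P Msg) (r : Run P)
    (θ θ' : Node P) : Prop :=
  ∃ π : List (Node P), IsActualPath P Q r π θ θ'

/-- An *n-resilient message block* from `θ` to `θ'` in `CG_Q(r)`: a set `Γ` of
paths from `θ` to `θ'` such that for every set `B` of at most `n` processes,
`Γ` contains a `B` null free path. -/
def ResBlockN (P : Params) {Msg : Type} (Q : Protocol P Msg) (r : Run P)
    (n : ℕ) (θ θ' : Node P) (Γ : Set (List (Node P))) : Prop :=
  (∀ π ∈ Γ, IsPath P Q r π θ θ') ∧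
    ∀ B : Finset (Fin P.N), B.card ≤ n → ∃ π ∈ Γ, BNullFree P Q r (↑B) π

/-- An *(f/failed)-resilient message block* from `θ` to `θ'` in `CG_Q(r)`:
a set `Γ` of paths from `θ` to `θ'` such that for every set `B` of processes
with `|B ∪ 𝔽^r| ≤ f`, `Γ` contains a `B` null free path. -/
def ResBlockFFailed (P : Params) {Msg : Type} (Q : Protocol P Msg) (r : Run P)
    (θ θ' : Node P) (Γ : Set (List (Node P))) : Prop :=
  (∀ π ∈ Γ, IsPath P Q r π θ θ') ∧
    ∀ B : Finset (Fin P.N), (B ∪ r.2.F).card ≤ P.f →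
      ∃ π ∈ Γ, BNullFree P Q r (↑B) π

/-- The empty failure pattern. -/
def nicePat (P : Params) : FPat P :=
  ⟨fun _ => none, by simp⟩

/-- The *nice run* `r̂(Q)`: `v_s = 1` and no process fails. -/
def niceRun (P : Params) : Run P := (true, nicePat P)

/-- `i` sends a null message to `j` at time `t` *in case* `φ`: in every run in
which the channel from `i` to `j` is not blocked at time `t`, `i` sends `j` a
null message at time `t` iff `φ` holds there. -/
def NullInCase (P : Params) {Msg : Type} (Q : Protocol P Msg)
    (i j : Fin P.N) (t : ℕ) (φ : Run P → ℕ → Prop) : Prop :=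
  ∀ r : Run P, ¬ BlockedAt P r i j t → (SendsNull P Q r i j t ↔ φ r t)

/-- A *Nice-based Message (NbM)* protocol: all actual messages are single-bit;
a process sends '0' (`false`) iff it knows the run is not nice and '1' (`true`)
otherwise; and every null message is a null message in case the sender does not
know that the run is not nice. -/
def NbM (P : Params) (Q : Protocol P Bool) : Prop :=
  (∀ (r : Run P) (i j : Fin P.N) (t : ℕ) (b : Bool),
      msgSent P Q r i j t = some b →
        (b = false ↔ Kn P Q i (fun r' _ => r' ≠ niceRun P) r t)) ∧
  (∀ (i j : Fin P.N) (t : ℕ), (∃ r : Run P, SendsNull P Q r i j t) →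
      NullInCase P Q i j t fun r' u =>
        ¬ Kn P Q i (fun r'' _ => r'' ≠ niceRun P) r' u)

/-- The fact `v_s ≠ 1 ∨ s is faulty`. -/
def BadFact (P : Params) : Run P → ℕ → Prop :=
  fun r' _ => r'.1 ≠ true ∨ (r'.2.fp P.s).isSome

/-- A *Robust-based Message (RbM)* protocol: all actual messages are single-bit;
a process sends '0' (`false`) iff it knows `v_s ≠ 1 ∨ s is faulty` and '1'
(`true`) otherwise; every null message is a null message in case the sender
does not know `v_s ≠ 1 ∨ s is faulty`; and every actual message of the nice
run is also sent in any run in which the corresponding channel is unblocked. -/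
def RbM (P : Params) (Q : Protocol P Bool) : Prop :=
  (∀ (r : Run P) (i j : Fin P.N) (t : ℕ) (b : Bool),
      msgSent P Q r i j t = some b → (b = false ↔ Kn P Q i (BadFact P) r t)) ∧
  (∀ (i j : Fin P.N) (t : ℕ), (∃ r : Run P, SendsNull P Q r i j t) →
      NullInCase P Q i j t fun r' u => ¬ Kn P Q i (BadFact P) r' u) ∧
  (∀ (r : Run P) (t : ℕ) (p q : Fin P.N),
      SendsActual P Q (niceRun P) p q t → ¬ BlockedAt P r p q t →
        SendsActual P Q r p q t)

/-- Action `α` of process `i` has (already) been performed by time `t` in `r`. -/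
def PerformedBy (P : Params) {Msg : Type} (Q : Protocol P Msg) (r : Run P)
    (i : Fin P.N) (α : ℕ) (t : ℕ) : Prop :=
  ∃ u ≤ t, Performs P Q r i α u

/-- `Q` is consistent with the Ordered Response instance
`⟨v_s = 1, a_1, …, a_k⟩` (action `a h` is assigned to process `ip h`):
`a h` is performed only if `v_s = 1` and all earlier actions have been
performed. -/
def ConsistentOR (P : Params) {Msg : Type} (Q : Protocol P Msg) {k : ℕ}
    (ip : Fin k → Fin P.N) (a : Fin k → ℕ) : Prop :=
  ∀ (r : Run P) (h : Fin k) (t : ℕ), Performs P Q r (ip h) (a h) t →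
    r.1 = true ∧ ∀ g : Fin k, g < h → PerformedBy P Q r (ip g) (a g) t

/-- `Q` solves the Ordered Response instance: it is consistent with it and all
the actions are performed in `Q`'s nice run. -/
def SolvesOR (P : Params) {Msg : Type} (Q : Protocol P Msg) {k : ℕ}
    (ip : Fin k → Fin P.N) (a : Fin k → ℕ) : Prop :=
  ConsistentOR P Q ip a ∧
    ∀ h : Fin k, ∃ t : ℕ, Performs P Q (niceRun P) (ip h) (a h) t

/-- `Q` solves Robust Information Transfer between `s` and `d`: in every run in
which `v_s = 1` and `s` does not fail, eventually `d` knows that `v_s = 1`. -/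
def SolvesRobustIT (P : Params) {Msg : Type} (Q : Protocol P Msg) : Prop :=
  ∀ r : Run P, r.1 = true → r.2.fp P.s = none →
    ∃ m : ℕ, Kn P Q P.d (fun r' _ => r'.1 = true) r m

/-- Process `p` occurs as the sender of an actual or null message on path `π`. -/
def SendsOn (P : Params) {Msg : Type} (Q : Protocol P Msg) (r : Run P)
    (π : List (Node P)) (p : Fin P.N) : Prop :=
  ∃ e ∈ π.zip π.tail, e.1.1 = p ∧ (Ea P Q r e.1 e.2 ∨ En P Q r e.1 e.2)

/-- The failure pattern `FP` is compatible with the run `r` (of protocol `Q`):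
exactly the processes of `FP` fail in `r`, at the times `FP` specifies, and in
the crash round of a failing process `q`, the message prescribed by `Q` from
`q` to `p` is sent iff `p` is not in `q`'s blocked set. -/
def Compatible (P : Params) {Msg : Type} (Q : Protocol P Msg) (r : Run P)
    (FP : FPat P) : Prop :=
  (∀ q : Fin P.N, (FP.fp q).isSome ↔ (r.2.fp q).isSome) ∧
  (∀ q : Fin P.N, ∀ x ∈ FP.fp q, ∀ y ∈ r.2.fp q, x.1 = y.1) ∧
  (∀ q : Fin P.N, ∀ x ∈ FP.fp q, ∀ p : Fin P.N,
    (P.chan q p = true ∧ (Q.send (stateAt P Q r x.1 q) p).isSome) →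
      ((msgSent P Q r q p x.1).isSome ↔ p ∉ x.2))

/-- `FP'` is *harsher* than `FP` (written `FP' ≤ FP`): every process failing in
`FP` fails in `FP'`, either strictly earlier or at the same time with a larger
blocked set. -/
def Harsher (P : Params) (FP' FP : FPat P) : Prop :=
  (∀ q : Fin P.N, (FP.fp q).isSome → (FP'.fp q).isSome) ∧
  ∀ q : Fin P.N, ∀ x ∈ FP.fp q, ∀ x' ∈ FP'.fp q,
    x'.1 < x.1 ∨ (x'.1 = x.1 ∧ x.2 ⊆ x'.2)

/-- `FP` is the minimal failure pattern w.r.t. `r`: it is compatible with `r`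
and every compatible pattern of which it is a harsher variant equals it. -/
def MinimalFP (P : Params) {Msg : Type} (Q : Protocol P Msg) (r : Run P)
    (FP : FPat P) : Prop :=
  Compatible P Q r FP ∧
    ∀ FP' : FPat P, Compatible P Q r FP' → Harsher P FP FP' → FP' = FP

/-! Without an enhanced message chain from `⟨s,0⟩` to `⟨d,m⟩`, the destination's state at
time `m` is the same as in the run with `v_s = 0` and the same failure pattern, so `d` cannot
know `v_s = 1`. By induction on time, every process not reached by such a chain has a state
independent of `v_s`: a message from a reached process to an unreached one is neither actual
nor null, hence it is sent in no run with the same failure pattern. -/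

theorem Chain.mono_time {P : Params} {Msg : Type} {Q : Protocol P Msg} {r : Run P}
    {θ θ' : Node P} (hc : Chain P Q r θ θ') {t' : ℕ} (h : θ'.2 ≤ t') :
    Chain P Q r θ (θ'.1, t') := by
  induction hc generalizing t' with
  | wait h0 => exact Chain.wait (h0.trans h)
  | step h1 h2 _ ih => exact Chain.step h1 h2 (ih h)

theorem Chain.snoc {P : Params} {Msg : Type} {Q : Protocol P Msg} {r : Run P}
    {θ θ' : Node P} (hc : Chain P Q r θ θ') {p : Fin P.N}
    (hs : SendsE P Q r θ'.1 p θ'.2) :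
    Chain P Q r θ (p, θ'.2 + 1) := by
  induction hc with
  | wait h0 => exact Chain.step h0 hs (Chain.wait le_rfl)
  | step h1 h2 _ ih => exact Chain.step h1 h2 (ih hs)

section SameFailurePattern

variable {P : Params} {Msg : Type} (Q : Protocol P Msg) {r r' : Run P}

theorem sendRound_eq_none_of_blockedAt (σ : Fin P.N → LState P Msg) {i j : Fin P.N} {t : ℕ}
    (hb : BlockedAt P r i j t) : sendRound P Q r σ t i j = none := by
  obtain ⟨x, hx, hlt | ⟨heq, hj⟩⟩ := hb <;> rw [Option.mem_def] at hx
  · simp [sendRound, hx, show ¬ t < x.1 by omega, show t ≠ x.1 by omega]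
  · simp [sendRound, hx, heq, hj]

theorem sendRound_congr (hr : r.2 = r'.2) {σ σ' : Fin P.N → LState P Msg} {i : Fin P.N}
    (hσ : σ i = σ' i) (t : ℕ) (j : Fin P.N) :
    sendRound P Q r σ t i j = sendRound P Q r' σ' t i j := by
  simp only [sendRound, hr, hσ]

theorem blockedAt_congr (hr : r.2 = r'.2) {i j : Fin P.N} {t : ℕ} :
    BlockedAt P r i j t ↔ BlockedAt P r' i j t := by
  simp only [BlockedAt, hr]

theorem msgSent_eq_none_of_not_sendsE (hr : r.2 = r'.2) {i j : Fin P.N} {t : ℕ}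
    (hne : ¬ SendsE P Q r i j t) : msgSent P Q r' i j t = none := by
  by_contra hsome
  have hsends : SendsActual P Q r' i j t := Option.ne_none_iff_isSome.mp hsome
  have hunblocked : ¬ BlockedAt P r i j t := fun hb =>
    hsome (sendRound_eq_none_of_blockedAt Q _ ((blockedAt_congr hr).mp hb))
  exact hne (Or.inr ⟨hunblocked, fun ha => hne (Or.inl ha), r', hsends⟩)

theorem stateAt_succ_congr (hr : r.2 = r'.2) {t : ℕ} {p : Fin P.N}
    (hp : stateAt P Q r t p = stateAt P Q r' t p)
    (hin : ∀ j, msgSent P Q r j p t = msgSent P Q r' j p t) :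
    stateAt P Q r (t + 1) p = stateAt P Q r' (t + 1) p := by
  have hstep : stepState P Q r (stateAt P Q r t) t p
      = stepState P Q r' (stateAt P Q r' t) t p := by
    have hrcvd := funext hin
    simp only [msgSent] at hrcvd
    simp only [stepState, hp, sendRound_congr Q hr hp, hrcvd]
  simp only [stateAt, ← hr]
  cases r.2.fp p with
  | none => exact hstep
  | some x => by_cases hx : x.1 ≤ t <;> simp [hx, hp, hstep]

theorem stateAt_eq_of_not_chain (hr : r.2 = r'.2) (t : ℕ) (p : Fin P.N)
    (hp : ¬ Chain P Q r (P.s, 0) (p, t)) : stateAt P Q r t p = stateAt P Q r' t p := by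
  induction t generalizing p with
  | zero =>
    have hps : p ≠ P.s := fun h => hp (h ▸ Chain.wait le_rfl)
    simp [stateAt, initVal, hps]
  | succ t ih =>
    refine stateAt_succ_congr Q hr (ih p fun hc => hp (hc.mono_time t.le_succ)) fun j => ?_
    by_cases hj : Chain P Q r (P.s, 0) (j, t)
    · have hne : ¬ SendsE P Q r j p t := fun hs => hp (hj.snoc hs)
      rw [msgSent_eq_none_of_not_sendsE Q rfl hne, msgSent_eq_none_of_not_sendsE Q hr hne]
    · exact sendRound_congr Q hr (σ := stateAt P Q r t) (σ' := stateAt P Q r' t) (ih j hj) t p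

end SameFailurePattern

/-- **Knowledge of enhanced message chains.**  If `K_d(v_s = 1)` holds at
`(r,m)`, then `K_d(θ_s ⇝ θ_d)` holds at `(r,m)`, where `θ_s = ⟨s,0⟩` and
`θ_d = ⟨d,m⟩`. -/
theorem knows_enhanced_chain (P : Params) {Msg : Type} (Q : Protocol P Msg)
    (r : Run P) (m : ℕ)
    (h : Kn P Q P.d (fun r' _ => r'.1 = true) r m) :
    Kn P Q P.d (fun r' _ => Chain P Q r' (P.s, 0) (P.d, m)) r m := by
  intro r₁ hr₁
  by_contra hno_chain
  have hsame := stateAt_eq_of_not_chain Q (r := r₁) (r' := (false, r₁.2)) rfl m P.d hno_chain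
  exact Bool.false_ne_true (h (false, r₁.2) (hsame.symm.trans hr₁))

end NullMessages
end

section
/- Nice-run Information Transfer, necessity: Let f ≥ 0, let Q be a deterministic protocol, and let r̂ be Q's nice run. If K_d(v_s = 1) holds at (r̂,m), then nG(Q) contains an f-resilient message block from θ_s = ⟨s,0⟩ to θ_d = ⟨d,m⟩. -/
namespace NullMessages

section Necessity

variable (P : Params) {Msg : Type} (Q : Protocol P Msg)

/-- `B` null free reachability from `⟨s,0⟩` in the nice graph. -/
def Dreach (B : Finset (Fin P.N)) (p : Fin P.N) (t : ℕ) : Prop :=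
  ∃ π : List (Node P), π.head? = some (P.s, 0) ∧ π.getLast? = some (p, t) ∧
    BNullFree P Q (niceRun P) (↑B) π

lemma Dreach_s0 (B : Finset (Fin P.N)) : Dreach P Q B P.s 0 :=
  ⟨[(P.s, 0)], rfl, rfl, List.isChain_singleton _⟩

lemma Dreach_extend {B : Finset (Fin P.N)} {j p : Fin P.N} {t t' : ℕ}
    (h : Dreach P Q B j t)
    (e : El P (j, t) (p, t') ∨ Ea P Q (niceRun P) (j, t) (p, t') ∨
      (En P Q (niceRun P) (j, t) (p, t') ∧ j ∉ (↑B : Set (Fin P.N)))) :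
    Dreach P Q B p t' := by
  obtain ⟨π, h1, h2, h3⟩ := h
  refine ⟨π ++ [(p, t')], ?_, ?_, ?_⟩
  · cases π with
    | nil => simp at h1
    | cons a l => simpa using h1
  · simp
  · refine List.isChain_append.2 ⟨h3, List.isChain_singleton _, ?_⟩
    intro x hx y hy
    rw [h2, Option.mem_some_iff] at hx
    simp only [List.head?_cons, Option.mem_some_iff] at hy
    subst hx; subst hy
    exact e

lemma Dreach_succ {B : Finset (Fin P.N)} {p : Fin P.N} {t : ℕ}
    (h : Dreach P Q B p t) : Dreach P Q B p (t + 1) :=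
  Dreach_extend P Q h (Or.inl ⟨rfl, rfl⟩)

lemma Dreach_mono {B : Finset (Fin P.N)} {p : Fin P.N} {u t : ℕ} (hut : u ≤ t)
    (h : Dreach P Q B p u) : Dreach P Q B p t := by
  induction t, hut using Nat.le_induction with
  | base => exact h
  | succ n hn ih => exact Dreach_succ P Q ih

open Classical in
/-- The failure pattern in which each process of `B` crashes, blocking everyone,
at the first time it becomes `B` null free reachable from `⟨s,0⟩`. -/
noncomputable def crashPat (B : Finset (Fin P.N)) (hB : B.card ≤ P.f) : FPat P where
  fp q := if h : q ∈ B ∧ ∃ t, Dreach P Q B q t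
          then some (Nat.find h.2, Finset.univ) else none
  card_le := by
    refine le_trans (Finset.card_le_card ?_) hB
    intro q hq
    simp only [Finset.mem_filter, Finset.mem_univ, true_and] at hq
    split_ifs at hq with hc
    · exact hc.1
    · simp at hq

lemma crashPat_eq_none {B : Finset (Fin P.N)} {hB : B.card ≤ P.f} {q : Fin P.N}
    (h : (crashPat P Q B hB).fp q = none) :
    ¬ (q ∈ B ∧ ∃ t, Dreach P Q B q t) := by
  intro hc
  rw [crashPat] at h
  simp only [dif_pos hc] at h
  exact Option.some_ne_none _ h

lemma crashPat_eq_some {B : Finset (Fin P.N)} {hB : B.card ≤ P.f} {q : Fin P.N}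
    {x : ℕ × Finset (Fin P.N)} (h : (crashPat P Q B hB).fp q = some x) :
    x.2 = Finset.univ ∧ Dreach P Q B q x.1 ∧ ∀ u, Dreach P Q B q u → x.1 ≤ u := by
  classical
  by_cases hc : q ∈ B ∧ ∃ t, Dreach P Q B q t
  · rw [crashPat] at h
    simp only [dif_pos hc, Option.some.injEq] at h
    subst h
    exact ⟨rfl, Nat.find_spec hc.2, fun u hu => Nat.find_le hu⟩
  · rw [crashPat] at h
    simp only [dif_neg hc] at h
    exact absurd h.symm (Option.some_ne_none _)

lemma stateAt_succ_active {r : Run P} {t : ℕ} {p : Fin P.N}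
    (h : ∀ x ∈ r.2.fp p, t < x.1) :
    stateAt P Q r (t + 1) p = stepState P Q r (stateAt P Q r t) t p := by
  rcases hfp : r.2.fp p with _ | x
  · simp [stateAt, hfp]
  · have := h x hfp
    simp [stateAt, hfp, Nat.not_le.2 this]

lemma sendRound_nice (σ : Fin P.N → LState P Msg) (t : ℕ) (i j : Fin P.N) :
    sendRound P Q (niceRun P) σ t i j = if P.chan i j then Q.send (σ i) j else none :=
  rfl

lemma not_blocked_nice (i j : Fin P.N) (t : ℕ) :
    ¬ BlockedAt P (niceRun P) i j t := by
  rintro ⟨x, hx, -⟩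
  simp [niceRun, nicePat] at hx

/-- Key invariant: in the run with source value `false` and failure pattern
`crashPat`, every node that is not `B` null free reachable from `⟨s,0⟩` has
the same local state as in the nice run. -/
lemma states_eq (B : Finset (Fin P.N)) (hB : B.card ≤ P.f) :
    ∀ (t : ℕ) (p : Fin P.N), ¬ Dreach P Q B p t →
      stateAt P Q (false, crashPat P Q B hB) t p = stateAt P Q (niceRun P) t p := by
  intro t
  induction t with
  | zero =>
      intro p hp
      have hps : p ≠ P.s := fun hh => hp (hh ▸ Dreach_s0 P Q B)
      simp [stateAt, initVal, hps]
  | succ t ih =>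
      intro p hp
      have hpt : ¬ Dreach P Q B p t := fun hh => hp (Dreach_succ P Q hh)
      have hstates := ih p hpt
      have hact : ∀ x ∈ (crashPat P Q B hB).fp p, t < x.1 := by
        intro x hx
        obtain ⟨-, hD, -⟩ := crashPat_eq_some P Q hx
        by_contra hle
        exact hpt (Dreach_mono P Q (Nat.not_lt.1 hle) hD)
      have hnice : ∀ x ∈ (niceRun P).2.fp p, t < x.1 := by
        intro x hx; exact absurd hx (by simp [niceRun, nicePat])
      rw [stateAt_succ_active P Q hact, stateAt_succ_active P Q hnice]
      -- messages sent by p at time t agree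
      have hsent : ∀ j, sendRound P Q (false, crashPat P Q B hB)
          (stateAt P Q (false, crashPat P Q B hB) t) t p j
          = sendRound P Q (niceRun P) (stateAt P Q (niceRun P) t) t p j := by
        intro j
        rw [sendRound_nice]
        rcases hfp : (crashPat P Q B hB).fp p with _ | x
        · simp [sendRound, hfp, hstates]
        · have hlt : t < x.1 := hact x hfp
          simp [sendRound, hfp, hlt, hstates]
      -- messages received by p at time t agree
      have hrcvd : ∀ j, sendRound P Q (false, crashPat P Q B hB)
          (stateAt P Q (false, crashPat P Q B hB) t) t j p
          = sendRound P Q (niceRun P) (stateAt P Q (niceRun P) t) t j p := by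
        intro j
        by_cases hch : P.chan j p = true
        · rcases hfp : (crashPat P Q B hB).fp j with _ | x
          · by_cases hDj : Dreach P Q B j t
            · have hjB : j ∉ B := fun hjB =>
                crashPat_eq_none P Q hfp ⟨hjB, t, hDj⟩
              have hnicenone : Q.send (stateAt P Q (niceRun P) t j) p = none := by
                by_contra hso
                have hSA : SendsActual P Q (niceRun P) j p t := by
                  unfold SendsActual msgSent
                  rw [sendRound_nice, if_pos hch]
                  exact Option.isSome_iff_ne_none.2 hso
                exact hp (Dreach_extend P Q hDj (Or.inr (Or.inl ⟨hSA, rfl⟩)))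
              have hr'none :
                  Q.send (stateAt P Q (false, crashPat P Q B hB) t j) p = none := by
                by_contra hso
                have hSA' : SendsActual P Q (false, crashPat P Q B hB) j p t := by
                  unfold SendsActual msgSent
                  simp only [sendRound, hfp, hch, if_true]
                  exact Option.isSome_iff_ne_none.2 hso
                have hSN : SendsNull P Q (niceRun P) j p t := by
                  refine ⟨not_blocked_nice P j p t, ?_,
                    ⟨(false, crashPat P Q B hB), hSA'⟩⟩
                  unfold SendsActual msgSent
                  rw [sendRound_nice, if_pos hch, hnicenone]
                  simp
                have hjB' : j ∉ (↑B : Set (Fin P.N)) := by simpa using hjB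
                exact hp (Dreach_extend P Q hDj (Or.inr (Or.inr ⟨⟨hSN, rfl⟩, hjB'⟩)))
              rw [sendRound_nice, if_pos hch, hnicenone]
              simp [sendRound, hfp, hch, hr'none]
            · have hst := ih j hDj
              rw [sendRound_nice, if_pos hch]
              simp [sendRound, hfp, hch, hst]
          · obtain ⟨hxuniv, hDx, hxmin⟩ := crashPat_eq_some P Q hfp
            by_cases hlt : t < x.1
            · have hDj : ¬ Dreach P Q B j t := fun hD =>
                absurd (hxmin t hD) (Nat.not_le.2 hlt)
              have hst := ih j hDj
              rw [sendRound_nice, if_pos hch]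
              simp [sendRound, hfp, hch, hlt, hst]
            · have hDt : Dreach P Q B j t :=
                Dreach_mono P Q (Nat.not_lt.1 hlt) hDx
              have hnicenone : Q.send (stateAt P Q (niceRun P) t j) p = none := by
                by_contra hso
                have hSA : SendsActual P Q (niceRun P) j p t := by
                  unfold SendsActual msgSent
                  rw [sendRound_nice, if_pos hch]
                  exact Option.isSome_iff_ne_none.2 hso
                exact hp (Dreach_extend P Q hDt (Or.inr (Or.inl ⟨hSA, rfl⟩)))
              have hpx : p ∈ x.2 := by rw [hxuniv]; exact Finset.mem_univ p
              rw [sendRound_nice, if_pos hch, hnicenone]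
              rcases eq_or_lt_of_le (Nat.not_lt.1 hlt) with heq | hlt2
              · simp [sendRound, hfp, hch, hlt, heq, hpx]
              · have hne : ¬ (t = x.1) := by omega
                simp [sendRound, hfp, hch, hlt, hne]
        · simp [sendRound, sendRound_nice, hch]
      have hev : (⟨fun j => sendRound P Q (false, crashPat P Q B hB)
            (stateAt P Q (false, crashPat P Q B hB) t) t p j,
          fun j => sendRound P Q (false, crashPat P Q B hB)
            (stateAt P Q (false, crashPat P Q B hB) t) t j p⟩ : Event P Msg)
          = ⟨fun j => sendRound P Q (niceRun P) (stateAt P Q (niceRun P) t) t p j,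
          fun j => sendRound P Q (niceRun P) (stateAt P Q (niceRun P) t) t j p⟩ := by
        congr 1
        · funext j; exact hsent j
        · funext j; exact hrcvd j
      simp only [stepState, hstates, hev]

end Necessity

/-- **Nice-run Information Transfer, necessity.**  If `K_d(v_s = 1)` holds at
time `m` in the nice run of `Q`, then `nG(Q)` contains an f-resilient message
block from `⟨s,0⟩` to `⟨d,m⟩`. -/
theorem nice_IT_necessary (P : Params) {Msg : Type} (Q : Protocol P Msg) (m : ℕ)
    (h : Kn P Q P.d (fun r' _ => r'.1 = true) (niceRun P) m) :
    ∃ Γ : Set (List (Node P)),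
      ResBlockN P Q (niceRun P) P.f (P.s, 0) (P.d, m) Γ := by
  refine ⟨{π | IsPath P Q (niceRun P) π (P.s, 0) (P.d, m)}, fun π hπ => hπ, ?_⟩
  intro B hB
  have hD : Dreach P Q B P.d m := by
    by_contra hD
    have hst := states_eq P Q B hB m P.d hD
    have hfalse := h (false, crashPat P Q B hB) hst
    simp at hfalse
  obtain ⟨π, h1, h2, h3⟩ := hD
  refine ⟨π, ⟨h1, h2, List.IsChain.imp ?_ h3⟩, h3⟩
  rintro u v (he | he | ⟨he, -⟩)
  · exact Or.inl he
  · exact Or.inr (Or.inl he)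
  · exact Or.inr (Or.inr he)

end NullMessages
end
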